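/- arXiv:1801.08597 — 3 statements merged into one kernel-verified Lean document; each statement's English description precedes it below -/
import Mathlib

section
/- Let H and K be n×n real symmetric matrices with n ≥ 3, where K is positive definite and H is positive semidefinite. If H + K ≥ I (i.e., H + K - I is positive semidefinite) and trace(H) = 1, then det(H)^{1/2} / det(K) ≤ n^{n/2} / (n-1)^n. -/
/-!
Diagonalise `H`: its eigenvalues `λᵢ` are nonnegative with `∑ λᵢ = 1`, and if one of them
vanishes the left-hand side is `0`. Otherwise `K ≥ 1 - H ≥ 0`, so monotonicity of `det` in the
Loewner order gives `√(det H) / det K ≤ ∏ √λᵢ / (1 - λᵢ)`. With `φ x = log x / 2 - log (1 - x)`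
it remains to show `∑ φ λᵢ ≤ n φ (1 / n)`. On `(0, 1/2]` the function `φ` lies below its tangent
at every `c ≤ 1/3`, which settles the case `λᵢ ≤ 1/2` for all `i`. Otherwise a single eigenvalue
`t > 1/2` dominates; the same tangent bound replaces the others by their mean `(1 - t) / (n - 1)`,
and the resulting inequality in `t` is elementary: a polynomial inequality for `n = 3`,
Bernoulli's inequality and a numerical estimate for `n ≥ 4`.
-/

open Real Finset

noncomputable def logSqrtDivOneSub (x : ℝ) : ℝ := log x / 2 - log (1 - x)

theorem exp_logSqrtDivOneSub {x : ℝ} (hx0 : 0 < x) (hx1 : x < 1) :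
    exp (logSqrtDivOneSub x) = √x / (1 - x) := by
  rw [logSqrtDivOneSub, exp_sub, exp_log (by linarith), sqrt_eq_rpow, rpow_def_of_pos hx0]
  ring_nf

theorem hasDerivAt_logSqrtDivOneSub {x : ℝ} (hx0 : 0 < x) (hx1 : x < 1) :
    HasDerivAt logSqrtDivOneSub ((1 + x) / (2 * x * (1 - x))) x := by
  have hlog := (hasDerivAt_log hx0.ne').div_const 2
  have hlog1 := ((hasDerivAt_id x).const_sub 1).log (sub_ne_zero.mpr hx1.ne')
  refine (hlog.sub hlog1).congr_deriv ?_
  have : 1 - x ≠ 0 := by linarith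
  simp only [id]
  field_simp
  ring

theorem isMaxOn_of_sub_mul_deriv_nonneg {f f' : ℝ → ℝ} {s : Set ℝ} (hs : s.OrdConnected)
    (hf : ∀ y ∈ s, HasDerivAt f (f' y) y) {c : ℝ} (hc : c ∈ s)
    (hsign : ∀ y ∈ s, 0 ≤ (c - y) * f' y) : IsMaxOn f s c := by
  intro x hx
  rcases le_total x c with hxc | hcx
  · have hsub : Set.Icc x c ⊆ s := hs.out hx hc
    refine monotoneOn_of_hasDerivWithinAt_nonneg (convex_Icc x c)
      (fun y hy => (hf y (hsub hy)).continuousAt.continuousWithinAt)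
      (fun y hy => (hf y (hsub (interior_subset hy))).hasDerivWithinAt)
      (fun y hy => ?_) ⟨le_rfl, hxc⟩ ⟨hxc, le_rfl⟩ hxc
    rw [interior_Icc] at hy
    nlinarith [hsign y (hsub (Set.Ioo_subset_Icc_self hy)), hy.2]
  · have hsub : Set.Icc c x ⊆ s := hs.out hc hx
    refine antitoneOn_of_hasDerivWithinAt_nonpos (convex_Icc c x)
      (fun y hy => (hf y (hsub hy)).continuousAt.continuousWithinAt)
      (fun y hy => (hf y (hsub (interior_subset hy))).hasDerivWithinAt)
      (fun y hy => ?_) ⟨le_rfl, hcx⟩ ⟨hcx, le_rfl⟩ hcx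
    rw [interior_Icc] at hy
    nlinarith [hsign y (hsub (Set.Ioo_subset_Icc_self hy)), hy.1]

theorem logSqrtDivOneSub_le_tangent {c x : ℝ} (hc0 : 0 < c) (hc : c ≤ 1 / 3) (hx0 : 0 < x)
    (hx : x ≤ 1 / 2) :
    logSqrtDivOneSub x ≤ logSqrtDivOneSub c + (1 + c) / (2 * c * (1 - c)) * (x - c) := by
  set f' : ℝ → ℝ := fun y =>
    (y - c) * ((1 + c) * y - (1 - c)) / (2 * y * c * (1 - y) * (1 - c))
  have hf : ∀ y ∈ Set.Ioc (0 : ℝ) (1 / 2), HasDerivAt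
      (fun y => logSqrtDivOneSub y - (1 + c) / (2 * c * (1 - c)) * y) (f' y) y := by
    intro y ⟨hy0, hy1⟩
    refine ((hasDerivAt_logSqrtDivOneSub hy0 (by linarith)).sub
      ((hasDerivAt_id y).const_mul _)).congr_deriv ?_
    have : 1 - c ≠ 0 := by linarith
    have : 1 - y ≠ 0 := by linarith
    simp only [f']
    field_simp
    ring
  -- `f'` vanishes at `c` and at `(1 - c) / (1 + c) ≥ 1 / 2`
  have hsign : ∀ y ∈ Set.Ioc (0 : ℝ) (1 / 2), 0 ≤ (c - y) * f' y := by
    intro y ⟨hy0, hy1⟩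
    have hden : 0 < 2 * y * c * (1 - y) * (1 - c) := by
      have : 0 < 1 - y := by linarith
      have : 0 < 1 - c := by linarith
      positivity
    have hroot : (1 + c) * y - (1 - c) ≤ 0 := by nlinarith
    rw [← mul_div_assoc]
    exact div_nonneg (by nlinarith [mul_self_nonneg (y - c)]) hden.le
  have hmax := isMaxOn_iff.mp
    (isMaxOn_of_sub_mul_deriv_nonneg Set.ordConnected_Ioc hf ⟨hc0, by linarith⟩ hsign) x ⟨hx0, hx⟩
  linarith

theorem sum_logSqrtDivOneSub_le_card_mul {ι : Type*} {s : Finset ι} (hs : s.Nonempty)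
    {x : ι → ℝ} (hx0 : ∀ i ∈ s, 0 < x i) (hx : ∀ i ∈ s, x i ≤ 1 / 2)
    (hmean : (∑ i ∈ s, x i) / #s ≤ 1 / 3) :
    ∑ i ∈ s, logSqrtDivOneSub (x i) ≤ #s * logSqrtDivOneSub ((∑ i ∈ s, x i) / #s) := by
  set c := (∑ i ∈ s, x i) / #s
  have hcard : (0 : ℝ) < #s := by exact_mod_cast hs.card_pos
  have hc0 : 0 < c := div_pos (sum_pos hx0 hs) hcard
  calc ∑ i ∈ s, logSqrtDivOneSub (x i)
      ≤ ∑ i ∈ s, (logSqrtDivOneSub c + (1 + c) / (2 * c * (1 - c)) * (x i - c)) :=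
        sum_le_sum fun i hi => logSqrtDivOneSub_le_tangent hc0 hmean (hx0 i hi) (hx i hi)
    _ = #s * logSqrtDivOneSub c + (1 + c) / (2 * c * (1 - c)) * (∑ i ∈ s, x i - #s * c) := by
        rw [sum_add_distrib, ← mul_sum, sum_sub_distrib]
        simp
    _ = #s * logSqrtDivOneSub c := by
        rw [mul_div_cancel₀ _ hcard.ne', sub_self, mul_zero, add_zero]

theorem logSqrtDivOneSub_inv {N : ℝ} (hN : 1 < N) :
    logSqrtDivOneSub N⁻¹ = log N / 2 - log (N - 1) := by
  rw [logSqrtDivOneSub, log_inv, show 1 - N⁻¹ = (N - 1) / N by field_simp,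
    log_div (by linarith) (by linarith)]
  ring

theorem logSqrtDivOneSub_add_two_mul_le {t : ℝ} (ht0 : 0 < t) (ht1 : t < 1) :
    logSqrtDivOneSub t + 2 * logSqrtDivOneSub ((1 - t) / 2) ≤ 3 * logSqrtDivOneSub 3⁻¹ := by
  -- `27 (1 + t)⁴ - 256 t = (3t - 1)² (3t² + 14t + 27)`
  have hpoly : 2 ^ 8 * t ≤ 3 ^ 3 * (1 + t) ^ 4 := by
    have : (0 : ℝ) ≤ 3 * t ^ 2 + 14 * t + 27 := by positivity
    nlinarith [mul_nonneg (sq_nonneg (3 * t - 1)) this]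
  have hlog := log_le_log (by positivity) hpoly
  rw [log_mul (by norm_num) ht0.ne', log_mul (by norm_num) (by positivity), log_pow, log_pow,
    log_pow] at hlog
  rw [logSqrtDivOneSub_inv (by norm_num), logSqrtDivOneSub, logSqrtDivOneSub,
    show 1 - (1 - t) / 2 = (1 + t) / 2 by ring, log_div (by linarith) two_ne_zero,
    log_div (by linarith) two_ne_zero, show (3 : ℝ) - 1 = 2 by norm_num]
  push_cast at hlog
  linarith

theorem add_one_mul_log_sub_one_le {n : ℕ} (hn : 4 ≤ n) :
    (n + 1) * log (n - 1) ≤ n * log n + (n - 4) * log 2 := by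
  rcases hn.eq_or_lt with rfl | hn
  · have h := log_le_log (by norm_num) (by norm_num : (3 : ℝ) ^ 5 ≤ 2 ^ 8)
    rw [log_pow, log_pow] at h
    rw [show ((4 : ℕ) : ℝ) = 2 ^ 2 by norm_num, log_pow, show (2 : ℝ) ^ 2 - 1 = 3 by norm_num]
    push_cast at h ⊢
    linarith
  have hN : (5 : ℝ) ≤ n := by exact_mod_cast hn
  have hN0 : (0 : ℝ) < n := by linarith
  have hN1 : (0 : ℝ) < n - 1 := by linarith
  -- both from `log y ≤ y - 1`, at `y = (n - 1) / 4` and at `y = (n - 1) / n`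
  have h1 : log (n - 1) ≤ 2 * log 2 + (n - 5) / 4 := by
    have := log_le_sub_one_of_pos (div_pos hN1 four_pos)
    rw [log_div hN1.ne' four_ne_zero, show (4 : ℝ) = 2 ^ 2 by norm_num, log_pow] at this
    push_cast at this
    linarith
  have h2 : n * log (n - 1) + 1 ≤ n * log n := by
    have := log_le_sub_one_of_pos (div_pos hN1 hN0)
    rw [log_div hN1.ne' hN0.ne', div_sub_one hN0.ne', le_div_iff₀ hN0] at this
    linarith
  have h3 : 0 ≤ ((n : ℝ) - 5) * (log 2 - 1 / 4) :=
    mul_nonneg (by linarith) (by linarith [log_two_gt_d9])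
  linarith [log_two_lt_d9]

theorem logSqrtDivOneSub_add_mul_le_of_four_le {n : ℕ} (hn : 4 ≤ n) {t : ℝ} (ht : 1 / 2 < t)
    (ht1 : t < 1) :
    logSqrtDivOneSub t + (n - 1) * logSqrtDivOneSub ((1 - t) / (n - 1)) ≤
      n * logSqrtDivOneSub (n : ℝ)⁻¹ := by
  have hN : (4 : ℝ) ≤ n := by exact_mod_cast hn
  set s := 1 - t
  have hs0 : 0 < s := by simp [s]; linarith
  have h1s : 1 - s = t := sub_sub_cancel 1 t
  -- Bernoulli: `t = 1 - s ≤ (1 - s / (n - 1)) ^ (n - 1)`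
  have hbern : log t ≤ (n - 1) * log (1 - s / (n - 1)) := by
    have h := one_add_mul_le_pow (a := -(s / (n - 1)))
      (by rw [neg_le_neg_iff, div_le_iff₀ (by linarith)]; nlinarith) (n - 1)
    rw [Nat.cast_sub (by omega), Nat.cast_one, mul_neg, mul_div_cancel₀ _ (by linarith),
      ← sub_eq_add_neg, ← sub_eq_add_neg] at h
    calc log t ≤ log ((1 - s / (n - 1)) ^ (n - 1)) := log_le_log (by linarith) (h1s ▸ h)
      _ = (n - 1) * log (1 - s / (n - 1)) := by rw [log_pow, Nat.cast_sub (by omega), Nat.cast_one]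
  have hlogt : -log 2 ≤ log t := by
    rw [← log_inv]; exact log_le_log (by norm_num) (by linarith)
  have hlogs : log s ≤ -log 2 := by
    rw [← log_inv]; exact log_le_log hs0 (by simp [s]; linarith)
  have hnum := add_one_mul_log_sub_one_le hn
  rw [logSqrtDivOneSub_inv (by linarith), logSqrtDivOneSub, logSqrtDivOneSub,
    log_div hs0.ne' (by linarith), show 1 - t = s from rfl]
  linarith [mul_le_mul_of_nonneg_left hlogs (by linarith : (0 : ℝ) ≤ n - 3)]

theorem logSqrtDivOneSub_add_mul_le {n : ℕ} (hn : 3 ≤ n) {t : ℝ} (ht : 1 / 2 < t)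
    (ht1 : t < 1) :
    logSqrtDivOneSub t + (n - 1) * logSqrtDivOneSub ((1 - t) / (n - 1)) ≤
      n * logSqrtDivOneSub (n : ℝ)⁻¹ := by
  rcases hn.eq_or_lt with rfl | hn
  · rw [Nat.cast_ofNat, show (3 : ℝ) - 1 = 2 by norm_num]
    exact logSqrtDivOneSub_add_two_mul_le (by linarith) ht1
  · exact logSqrtDivOneSub_add_mul_le_of_four_le hn ht ht1

theorem lt_one_of_pos_of_sum_eq_one {ι : Type*} [Fintype ι] (hcard : 1 < Fintype.card ι)
    {x : ι → ℝ} (hx0 : ∀ i, 0 < x i) (hsum : ∑ i, x i = 1) (i : ι) : x i < 1 := by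
  obtain ⟨j, hj⟩ := Fintype.exists_ne_of_one_lt_card hcard i
  exact hsum ▸ single_lt_sum hj (mem_univ i) (mem_univ j) (hx0 j)
    fun k _ _ => (hx0 k).le

theorem sum_logSqrtDivOneSub_le {ι : Type*} [Fintype ι] {n : ℕ} (hcard : Fintype.card ι = n)
    (hn : 3 ≤ n) {x : ι → ℝ} (hx0 : ∀ i, 0 < x i) (hsum : ∑ i, x i = 1) :
    ∑ i, logSqrtDivOneSub (x i) ≤ n * logSqrtDivOneSub (n : ℝ)⁻¹ := by
  classical
  have hN : (3 : ℝ) ≤ n := by exact_mod_cast hn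
  by_cases hsmall : ∀ i, x i ≤ 1 / 2
  · have huniv : (univ : Finset ι).Nonempty := card_pos.mp (by rw [card_univ]; omega)
    have h := sum_logSqrtDivOneSub_le_card_mul huniv (fun i _ => hx0 i) (fun i _ => hsmall i)
      (by rw [hsum, card_univ, hcard, one_div, one_div]; exact inv_anti₀ (by norm_num) hN)
    rwa [hsum, card_univ, hcard, one_div] at h
  push Not at hsmall
  obtain ⟨k, hk⟩ := hsmall
  set e := univ.erase k
  have he : e.Nonempty := card_pos.mp (by rw [card_erase_of_mem (mem_univ k), card_univ]; omega)
  have he_card : (#e : ℝ) = n - 1 := by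
    rw [card_erase_of_mem (mem_univ k), card_univ, hcard, Nat.cast_sub (by omega), Nat.cast_one]
  have he_sum : ∑ j ∈ e, x j = 1 - x k := by
    rw [← hsum, ← add_sum_erase univ x (mem_univ k)]
    ring
  have he_half : ∀ j ∈ e, x j ≤ 1 / 2 := fun j hj => by
    linarith [single_le_sum (fun i _ => (hx0 i).le) hj]
  have h := sum_logSqrtDivOneSub_le_card_mul he (fun j _ => hx0 j) he_half
    (by rw [he_sum, he_card, div_le_iff₀ (by linarith)]; linarith)
  rw [he_sum, he_card] at h
  have hk1 := lt_one_of_pos_of_sum_eq_one (by omega) hx0 hsum k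
  rw [← add_sum_erase _ _ (mem_univ k)]
  linarith [logSqrtDivOneSub_add_mul_le hn hk hk1]

theorem prod_sqrt_div_one_sub_le {ι : Type*} [Fintype ι] {n : ℕ} (hcard : Fintype.card ι = n)
    (hn : 3 ≤ n) {x : ι → ℝ} (hx0 : ∀ i, 0 < x i) (hsum : ∑ i, x i = 1) :
    ∏ i, √(x i) / (1 - x i) ≤ (n : ℝ) ^ ((n : ℝ) / 2) / ((n : ℝ) - 1) ^ n := by
  have hN : (3 : ℝ) ≤ n := by exact_mod_cast hn
  have hx1 := lt_one_of_pos_of_sum_eq_one (by omega) hx0 hsum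
  calc ∏ i, √(x i) / (1 - x i) = exp (∑ i, logSqrtDivOneSub (x i)) := by
        rw [exp_sum]
        exact prod_congr rfl fun i _ => (exp_logSqrtDivOneSub (hx0 i) (hx1 i)).symm
    _ ≤ exp (n * logSqrtDivOneSub (n : ℝ)⁻¹) :=
        exp_le_exp.mpr (sum_logSqrtDivOneSub_le hcard hn hx0 hsum)
    _ = _ := by
        rw [logSqrtDivOneSub_inv (by linarith), mul_sub, exp_sub, rpow_def_of_pos (by linarith),
          ← rpow_natCast, rpow_def_of_pos (by linarith)]
        ring_nf

namespace Matrix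

open scoped MatrixOrder

variable {m : Type*} [Fintype m] [DecidableEq m]

theorem IsHermitian.det_cfc {A : Matrix m m ℝ} (hA : A.IsHermitian) (f : ℝ → ℝ) :
    (cfc f A).det = ∏ i, f (hA.eigenvalues i) := by
  rw [hA.cfc_eq]
  simp [IsHermitian.cfc, -Unitary.conjStarAlgAut_apply]

theorem IsHermitian.det_one_sub {A : Matrix m m ℝ} (hA : A.IsHermitian) :
    (1 - A).det = ∏ i, (1 - hA.eigenvalues i) := by
  rw [← hA.det_cfc, cfc_sub (fun _ => (1 : ℝ)) (fun x => x) A, cfc_const_one ℝ A,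
    cfc_id' ℝ A]

theorem IsHermitian.posSemidef_one_sub {A : Matrix m m ℝ} (hA : A.IsHermitian)
    (h : ∀ i, hA.eigenvalues i ≤ 1) : (1 - A).PosSemidef := by
  rw [← nonneg_iff_posSemidef, ← cfc_id' ℝ A, ← cfc_const_one ℝ A,
    ← cfc_sub (fun _ => (1 : ℝ)) (fun x => x) A]
  refine cfc_nonneg fun x hx => ?_
  rw [hA.spectrum_real_eq_range_eigenvalues] at hx
  obtain ⟨i, rfl⟩ := hx
  exact sub_nonneg.mpr (h i)

theorem PosSemidef.one_le_det_one_add {M : Matrix m m ℝ} (hM : M.PosSemidef) :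
    1 ≤ (1 + M).det := by
  rw [← cfc_id' ℝ M, ← cfc_const_one ℝ M, ← cfc_add M (fun _ => (1 : ℝ)) (fun x => x),
    hM.isHermitian.det_cfc]
  exact one_le_prod fun i _ => le_add_of_nonneg_right (hM.eigenvalues_nonneg i)

theorem PosSemidef.det_le_det {A B : Matrix m m ℝ} (hA : A.PosSemidef)
    (hAB : (B - A).PosSemidef) : A.det ≤ B.det := by
  rcases hA.det_nonneg.eq_or_lt with hdet | hdet
  · rw [← hdet]
    simpa using (hA.add hAB).det_nonneg
  set C := CFC.sqrt A
  have hCpsd : C.PosSemidef := nonneg_iff_posSemidef.mp (CFC.sqrt_nonneg A)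
  have hCC : C * C = A := CFC.sqrt_mul_sqrt_self A hA.nonneg
  have hC : IsUnit C.det := by
    refine isUnit_iff_ne_zero.mpr fun h => hdet.ne' ?_
    rw [← hCC, det_mul, h, zero_mul]
  have hCinv : (C⁻¹)ᴴ = C⁻¹ := by
    rw [conjTranspose_nonsing_inv, hCpsd.isHermitian.eq]
  set M := C⁻¹ * (B - A) * C⁻¹
  have hM : M.PosSemidef := by
    simpa only [hCinv] using hAB.mul_mul_conjTranspose_same C⁻¹
  have hB : B = C * (1 + M) * C := by
    simp only [M, Matrix.mul_add, Matrix.add_mul, Matrix.mul_one, hCC, ← Matrix.mul_assoc,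
      mul_nonsing_inv C hC, Matrix.one_mul]
    rw [Matrix.mul_assoc (B - A), nonsing_inv_mul C hC, Matrix.mul_one]
    abel
  calc A.det = C.det * 1 * C.det := by rw [← hCC, det_mul, mul_one]
    _ ≤ C.det * (1 + M).det * C.det := by
      have := hCpsd.det_nonneg
      gcongr
      exact hM.one_le_det_one_add
    _ = B.det := by rw [hB, det_mul, det_mul]

end Matrix

theorem bcg_determinant_inequality_general (n : ℕ) (hn : 3 ≤ n)
    (H K : Matrix (Fin n) (Fin n) ℝ)
    (hH : H.PosSemidef)
    (hHK : (H + K - 1).PosSemidef)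
    (htr : H.trace = 1) :
    Real.sqrt H.det / K.det ≤ (n : ℝ) ^ ((n : ℝ) / 2) / ((n : ℝ) - 1) ^ n := by
  set x := hH.isHermitian.eigenvalues
  have hdetH : H.det = ∏ i, x i := by
    simpa using hH.isHermitian.det_eq_prod_eigenvalues
  have hsum : ∑ i, x i = 1 := by
    simpa using hH.isHermitian.trace_eq_sum_eigenvalues.symm.trans htr
  by_cases hzero : ∃ i, x i = 0
  · obtain ⟨i, hi⟩ := hzero
    rw [hdetH, prod_eq_zero (mem_univ i) hi, sqrt_zero, zero_div]
    have : (1 : ℝ) ≤ n := by exact_mod_cast (by omega : 1 ≤ n)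
    exact div_nonneg (by positivity) (pow_nonneg (sub_nonneg.mpr this) n)
  push Not at hzero
  have hx0 : ∀ i, 0 < x i := fun i => (hH.eigenvalues_nonneg i).lt_of_ne' (hzero i)
  have hx1 := lt_one_of_pos_of_sum_eq_one (by rw [Fintype.card_fin]; omega) hx0 hsum
  have hdet1 : 0 < (1 - H).det := by
    rw [hH.isHermitian.det_one_sub]
    exact prod_pos fun i _ => sub_pos.mpr (hx1 i)
  have hdetK : (1 - H).det ≤ K.det :=
    (hH.isHermitian.posSemidef_one_sub fun i => (hx1 i).le).det_le_det
      (by rwa [sub_sub_eq_add_sub, add_comm K])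
  calc √H.det / K.det ≤ √H.det / (1 - H).det :=
        div_le_div_of_nonneg_left (sqrt_nonneg _) hdet1 hdetK
    _ = ∏ i, √(x i) / (1 - x i) := by
        rw [hdetH, hH.isHermitian.det_one_sub,
          sqrt_prod _ fun i _ => (hx0 i).le, prod_div_distrib]
    _ ≤ _ := prod_sqrt_div_one_sub_le (Fintype.card_fin n) hn hx0 hsum

/-- Besson–Courtois–Gallot determinant inequality: if `H`, `K` are `n × n`
real symmetric matrices with `n ≥ 3`, `K` positive definite, `H` positive
semidefinite, `H + K ≥ I` (i.e. `H + K - 1` positive semidefinite) and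
`trace H = 1`, then `√(det H) / det K ≤ n^(n/2) / (n-1)^n`. -/
theorem bcg_determinant_inequality (n : ℕ) (hn : 3 ≤ n)
    (H K : Matrix (Fin n) (Fin n) ℝ)
    (hH : H.PosSemidef) (hK : K.PosDef)
    (hHK : (H + K - 1).PosSemidef)
    (htr : H.trace = 1) :
    Real.sqrt H.det / K.det ≤ (n : ℝ) ^ ((n : ℝ) / 2) / ((n : ℝ) - 1) ^ n :=
  bcg_determinant_inequality_general n hn H K hH hHK htr
end

section
/- Let K, H : ℝⁿ → ℝⁿ be symmetric linear maps with K positive definite and H positive semidefinite, and let D : ℝⁿ → ℝⁿ be a linear map such that |⟨K(D u), w⟩| ≤ 2 ⟨H w, w⟩^{1/2} for every unit vector u and every vector w. Then |det(K) · det(D)| ≤ 2ⁿ det(H)^{1/2}, and hence |det(D)| ≤ 2ⁿ det(H)^{1/2} / det(K). -/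
open scoped RealInnerProductSpace

lemma sqrt_prod_fin {n : ℕ} (μ : Fin n → ℝ) (hμ : ∀ i, 0 ≤ μ i) :
    Real.sqrt (∏ i, μ i) = ∏ i, Real.sqrt (μ i) := by
  induction n with
  | zero => simp
  | succ m ih =>
    rw [Fin.prod_univ_succ, Fin.prod_univ_succ, Real.sqrt_mul (hμ 0),
      ih (fun i => μ i.succ) (fun i => hμ i.succ)]

lemma det_eq_prod_eigs {n : ℕ}
    (T : EuclideanSpace ℝ (Fin n) →ₗ[ℝ] EuclideanSpace ℝ (Fin n)) (hT : T.IsSymmetric)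
    (hn : Module.finrank ℝ (EuclideanSpace ℝ (Fin n)) = n) :
    LinearMap.det T = ∏ i, hT.eigenvalues hn i := by
  classical
  set e := hT.eigenvectorBasis hn with he
  have h1 : e.toBasis.det (⇑T ∘ ⇑e) = LinearMap.det T * e.toBasis.det ⇑e :=
    e.toBasis.det_comp T ⇑e
  have h2 : (⇑T ∘ ⇑e) = fun i => hT.eigenvalues hn i • e i := by
    funext i
    exact_mod_cast hT.apply_eigenvectorBasis hn i
  have h3 : e.toBasis.det ⇑e = 1 := by
    have := e.toBasis.det_self
    simpa using this
  rw [h2] at h1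
  have h4 : e.toBasis.det (fun i => hT.eigenvalues hn i • e i)
      = (∏ i, hT.eigenvalues hn i) • e.toBasis.det ⇑e := by
    exact e.toBasis.det.map_smul_univ (fun i => hT.eigenvalues hn i) ⇑e
  rw [h4, h3, smul_eq_mul, mul_one] at h1
  rw [mul_one] at h1
  exact h1.symm

lemma eig_eq_inner {n : ℕ}
    (T : EuclideanSpace ℝ (Fin n) →ₗ[ℝ] EuclideanSpace ℝ (Fin n)) (hT : T.IsSymmetric)
    (hn : Module.finrank ℝ (EuclideanSpace ℝ (Fin n)) = n) (i : Fin n) :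
    hT.eigenvalues hn i = ⟪T (hT.eigenvectorBasis hn i), hT.eigenvectorBasis hn i⟫ := by
  have h := hT.apply_eigenvectorBasis hn i
  rw [show ((hT.eigenvalues hn i : ℝ)) = hT.eigenvalues hn i from rfl] at h
  rw [h, real_inner_smul_left, real_inner_self_eq_norm_sq,
    (hT.eigenvectorBasis hn).orthonormal.1 i]
  simp

/-- Jacobian estimate (inequality 2.3): if `K` is symmetric positive definite,
`H` symmetric positive semidefinite, and `D` is a linear map with
`|⟨K(Du), w⟩| ≤ 2⟨Hw, w⟩^{1/2}` for all unit vectors `u` and all `w`, then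
`|det K · det D| ≤ 2ⁿ det(H)^{1/2}`, hence `|det D| ≤ 2ⁿ det(H)^{1/2}/det K`. -/
theorem barycentric_jacobian_estimate (n : ℕ)
    (K H D : EuclideanSpace ℝ (Fin n) →ₗ[ℝ] EuclideanSpace ℝ (Fin n))
    (hKsymm : ∀ v w, ⟪K v, w⟫ = ⟪v, K w⟫)
    (hKpos : ∀ v, v ≠ 0 → 0 < ⟪K v, v⟫)
    (hHsymm : ∀ v w, ⟪H v, w⟫ = ⟪v, H w⟫)
    (hHpsd : ∀ v, 0 ≤ ⟪H v, v⟫)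
    (hbound : ∀ u w : EuclideanSpace ℝ (Fin n), ‖u‖ = 1 →
      |⟪K (D u), w⟫| ≤ 2 * Real.sqrt ⟪H w, w⟫) :
    |LinearMap.det K * LinearMap.det D| ≤ 2 ^ n * Real.sqrt (LinearMap.det H) ∧
      |LinearMap.det D| ≤ 2 ^ n * Real.sqrt (LinearMap.det H) / LinearMap.det K := by
  classical
  have hn : Module.finrank ℝ (EuclideanSpace ℝ (Fin n)) = n := finrank_euclideanSpace_fin
  have hcard : Module.finrank ℝ (EuclideanSpace ℝ (Fin n)) = Fintype.card (Fin n) := by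
    simp [hn]
  have hHsym : H.IsSymmetric := hHsymm
  have hKsym : K.IsSymmetric := hKsymm
  set M : EuclideanSpace ℝ (Fin n) →ₗ[ℝ] EuclideanSpace ℝ (Fin n) := K ∘ₗ D with hMdef
  set v := hHsym.eigenvectorBasis hn with hv
  set μ := hHsym.eigenvalues hn with hμdef
  have hμ : ∀ i, μ i = ⟪H (v i), v i⟫ := fun i => eig_eq_inner H hHsym hn i
  have hμ0 : ∀ i, 0 ≤ μ i := fun i => (hμ i) ▸ hHpsd (v i)
  set f : Fin n → EuclideanSpace ℝ (Fin n) := fun i => LinearMap.adjoint M (v i) with hf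
  set u := InnerProductSpace.gramSchmidtOrthonormalBasis (𝕜 := ℝ) hcard f with hu
  have hdet1 : u.toBasis.det f = ∏ i, ⟪u i, f i⟫ :=
    InnerProductSpace.gramSchmidtOrthonormalBasis_det (𝕜 := ℝ) hcard f
  have hdet2 : u.toBasis.det f = LinearMap.det (LinearMap.adjoint M) * u.toBasis.det ⇑v :=
    u.toBasis.det_comp (LinearMap.adjoint M) ⇑v
  have hadj : LinearMap.det (LinearMap.adjoint M) = LinearMap.det M := by
    set b := EuclideanSpace.basisFun (Fin n) ℝ with hb
    rw [← LinearMap.det_toMatrix b.toBasis (LinearMap.adjoint M),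
      ← LinearMap.det_toMatrix b.toBasis M, LinearMap.toMatrix_adjoint b b M,
      Matrix.det_conjTranspose, star_trivial]
  have habsdet : |u.toBasis.det ⇑v| = 1 := by
    rcases u.det_to_matrix_orthonormalBasis_real v with h | h <;> rw [h] <;> norm_num
  have hdiag : ∀ i, |⟪u i, f i⟫| ≤ 2 * Real.sqrt (μ i) := by
    intro i
    have h1 : ⟪u i, f i⟫ = ⟪M (u i), v i⟫ :=
      LinearMap.adjoint_inner_right M (u i) (v i)
    have h2 := hbound (u i) (v i) (u.orthonormal.1 i)
    rw [h1, hμ i]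
    exact h2
  have key : |LinearMap.det M| ≤ 2 ^ n * Real.sqrt (LinearMap.det H) := by
    have h3 : |LinearMap.det M| = |∏ i, ⟪u i, f i⟫| := by
      rw [← hdet1, hdet2, abs_mul, habsdet, mul_one, hadj]
    rw [h3, Finset.abs_prod]
    calc ∏ i, |⟪u i, f i⟫| ≤ ∏ i : Fin n, (2 * Real.sqrt (μ i)) :=
          Finset.prod_le_prod (fun i _ => abs_nonneg _) (fun i _ => hdiag i)
      _ = 2 ^ n * Real.sqrt (∏ i, μ i) := by
          rw [Finset.prod_mul_distrib, Finset.prod_const, sqrt_prod_fin μ hμ0]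
          simp
      _ = 2 ^ n * Real.sqrt (LinearMap.det H) := by
          rw [det_eq_prod_eigs H hHsym hn]
  have hdetM : LinearMap.det M = LinearMap.det K * LinearMap.det D :=
    LinearMap.det_comp K D
  rw [hdetM] at key
  have hKdet : 0 < LinearMap.det K := by
    rw [det_eq_prod_eigs K hKsym hn]
    apply Finset.prod_pos
    intro i _
    rw [eig_eq_inner K hKsym hn i]
    exact hKpos _ ((hKsym.eigenvectorBasis hn).toBasis.ne_zero i)
  refine ⟨key, ?_⟩
  rw [le_div_iff₀ hKdet]
  calc |LinearMap.det D| * LinearMap.det K = |LinearMap.det K * LinearMap.det D| := by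
        rw [abs_mul, abs_of_pos hKdet]; ring
    _ ≤ 2 ^ n * Real.sqrt (LinearMap.det H) := key
end

section
/- Let M be a closed oriented n-manifold and suppose there exists a chain map st : C_*(M;ℝ) → C_*(M;ℝ) on singular chains, chain homotopic to the identity, together with a constant C > 0 and a nonnegative smooth function φ on M with ∫_M φ dV > 0, such that for every singular n-simplex σ, |∫_{st(σ)} φ dV| ≤ C. Then the simplicial volume satisfies ‖M‖ ≥ (∫_M φ dV)/C > 0. -/
/-- Positivity of simplicial volume via a straightening (Theorem 2.9,
abstracted). Let `S` be the set of singular `n`-simplices of the closed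
oriented `n`-manifold `M`, `Rep ⊆ S →₀ ℝ` the (nonempty) set of real singular
cycles representing the fundamental class `[M]`, and for each `σ` let
`I σ = ∫_{st(σ)} φ dV` denote the integral of the positive density `φ dV`
(with total mass `T = ∫_M φ dV > 0`) over the straightened simplex `st(σ)`.
Since `st` is chain homotopic to the identity, `T = Σ aᵢ · I(σᵢ)` for every
representative; if moreover `|I σ| ≤ C` for all `σ`, then the simplicial
volume `‖M‖ = inf Σ|aᵢ|` satisfies `‖M‖ ≥ T / C > 0`. -/
theorem simplicial_volume_positive_of_straightening
    {S : Type*} (Rep : Set (S →₀ ℝ)) (hRep : Rep.Nonempty)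
    (I : S → ℝ) (C T : ℝ) (hC : 0 < C) (hT : 0 < T)
    (hbound : ∀ σ : S, |I σ| ≤ C)
    (hhomotopic : ∀ a ∈ Rep, T = ∑ σ ∈ a.support, a σ * I σ) :
    T / C ≤ sInf {s : ℝ | ∃ a ∈ Rep, s = ∑ σ ∈ a.support, |a σ|} ∧
      0 < sInf {s : ℝ | ∃ a ∈ Rep, s = ∑ σ ∈ a.support, |a σ|} := by
  have key : ∀ s ∈ {s : ℝ | ∃ a ∈ Rep, s = ∑ σ ∈ a.support, |a σ|}, T / C ≤ s := by
    rintro s ⟨a, ha, rfl⟩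
    have h1 : T ≤ ∑ σ ∈ a.support, |a σ| * C := by
      rw [hhomotopic a ha]
      calc ∑ σ ∈ a.support, a σ * I σ ≤ |∑ σ ∈ a.support, a σ * I σ| := le_abs_self _
        _ ≤ ∑ σ ∈ a.support, |a σ * I σ| := Finset.abs_sum_le_sum_abs _ _
        _ ≤ ∑ σ ∈ a.support, |a σ| * C := by
            refine Finset.sum_le_sum fun σ _ => ?_
            rw [abs_mul]
            exact mul_le_mul_of_nonneg_left (hbound σ) (abs_nonneg _)
    rw [← Finset.sum_mul] at h1
    rw [div_le_iff₀ hC]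
    linarith
  have hle : T / C ≤ sInf {s : ℝ | ∃ a ∈ Rep, s = ∑ σ ∈ a.support, |a σ|} := by
    obtain ⟨a, ha⟩ := hRep
    exact le_csInf ⟨_, a, ha, rfl⟩ key
  exact ⟨hle, lt_of_lt_of_le (div_pos hT hC) hle⟩
end
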